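/- √(1 + 2√2)·sin(3π/16 + arcsin(−0.79/√(1 + 2√2))) ≥ 0.33. In particular this quantity is strictly positive, so in the Newtonian planar dihedral problem the continued right unstable branch of W^u(c₋) crosses the section v = 0 at an angle θ ∈ (0, π/4). -/
import Mathlib
set_option maxHeartbeats 1000000


open Real

/-- `√(1 + 2√2)·sin(3π/16 + arcsin(−0.79/√(1 + 2√2))) ≥ 0.33`. -/
theorem newtonian_planar_v_at_zero_pos :
    Real.sqrt (1 + 2 * Real.sqrt 2) *
      Real.sin (3 * π / 16 + Real.arcsin (-0.79 / Real.sqrt (1 + 2 * Real.sqrt 2)))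
      ≥ 0.33 := by
  have h2 : (0:ℝ) ≤ Real.sqrt 2 := Real.sqrt_nonneg 2
  have hs2 : Real.sqrt 2 ^ 2 = 2 := Real.sq_sqrt (by norm_num)
  have s2l : (1.4142135 : ℝ) ≤ Real.sqrt 2 := by nlinarith
  have s2u : Real.sqrt 2 ≤ 1.4142136 := by nlinarith
  set v := Real.sqrt (1 + 2 * Real.sqrt 2) with hv
  have hv0 : (0:ℝ) ≤ v := Real.sqrt_nonneg _
  have hv2 : v ^ 2 = 1 + 2 * Real.sqrt 2 := Real.sq_sqrt (by nlinarith)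
  have hvl : (1.95:ℝ) ≤ v := by nlinarith
  have hvne : v ≠ 0 := by positivity
  -- bound on sin (π/8)
  have hw0 : (0:ℝ) ≤ Real.sqrt (2 - Real.sqrt 2) := Real.sqrt_nonneg _
  have hw2 : Real.sqrt (2 - Real.sqrt 2) ^ 2 = 2 - Real.sqrt 2 :=
    Real.sq_sqrt (by nlinarith)
  have hp8 : Real.sin (π / 8) ≤ 0.38268346 := by
    rw [Real.sin_pi_div_eight]
    nlinarith
  -- cos (3π/8) = sin (π/8)
  have hc38 : Real.cos (3 * π / 8) = Real.sin (π / 8) := by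
    rw [show (3 * π / 8 : ℝ) = π / 2 - π / 8 by ring, Real.cos_pi_div_two_sub]
  -- bounds on sin and cos of 3π/16
  set A := (3 * π / 16 : ℝ) with hA
  have hApos : 0 ≤ A := by have := Real.pi_pos; rw [hA]; linarith
  have hAlt : A ≤ π / 2 := by have := Real.pi_pos; rw [hA]; linarith
  have hsinA0 : 0 ≤ Real.sin A :=
    Real.sin_nonneg_of_nonneg_of_le_pi hApos (by have := Real.pi_pos; linarith)
  have hcosA0 : 0 ≤ Real.cos A :=
    Real.cos_nonneg_of_mem_Icc ⟨by have := Real.pi_pos; linarith, hAlt⟩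
  have hsinsq : Real.sin A ^ 2 = 1 / 2 - Real.cos (3 * π / 8) / 2 := by
    rw [Real.sin_sq_eq_half_sub, show (2 * A : ℝ) = 3 * π / 8 by rw [hA]; ring]
  have hcossq : Real.cos A ^ 2 = 1 / 2 + Real.cos (3 * π / 8) / 2 := by
    have := Real.sin_sq_add_cos_sq A
    nlinarith
  have hsinp80 : 0 ≤ Real.sin (π / 8) :=
    Real.sin_nonneg_of_nonneg_of_le_pi (by have := Real.pi_pos; positivity)
      (by have := Real.pi_pos; linarith)
  have hsinAl : (0.5555 : ℝ) ≤ Real.sin A := by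
    have h1 : Real.sin A ^ 2 ≥ 1 / 2 - 0.38268346 / 2 := by
      rw [hsinsq, hc38]; linarith
    nlinarith
  have hcosAu : Real.cos A ≤ 0.8315 := by
    have h1 : Real.cos A ^ 2 ≤ 1 / 2 + 0.38268346 / 2 := by
      rw [hcossq, hc38]; linarith
    nlinarith
  -- the arcsin argument
  set x := (-0.79 / v : ℝ) with hx
  have hx1 : -1 ≤ x := by
    rw [hx, le_div_iff₀ (by positivity : (0:ℝ) < v)]
    linarith
  have hx1' : x ≤ 1 := by
    rw [hx, div_le_iff₀ (by positivity : (0:ℝ) < v)]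
    linarith
  have hsinarc : Real.sin (Real.arcsin x) = x := Real.sin_arcsin hx1 hx1'
  have hcosarc : Real.cos (Real.arcsin x) = Real.sqrt (1 - x ^ 2) :=
    Real.cos_arcsin x
  rw [Real.sin_add, hsinarc, hcosarc]
  -- v * √(1 - x²) = √(v² (1 - x²)) = √(0.3759 + 2√2)
  have hxv : x * v = -0.79 := by rw [hx]; field_simp
  have hx2 : v ^ 2 * (1 - x ^ 2) = 0.3759 + 2 * Real.sqrt 2 := by
    linear_combination hv2 + (0.79 - x * v) * hxv
  have hkey : v * Real.sqrt (1 - x ^ 2) = Real.sqrt (0.3759 + 2 * Real.sqrt 2) := by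
    rw [← Real.sqrt_sq hv0, ← Real.sqrt_mul (by positivity), hx2]
  have hvx : v * x = -0.79 := by rw [hx]; field_simp
  have hr0 : (0:ℝ) ≤ Real.sqrt (0.3759 + 2 * Real.sqrt 2) := Real.sqrt_nonneg _
  have hr2 : Real.sqrt (0.3759 + 2 * Real.sqrt 2) ^ 2 = 0.3759 + 2 * Real.sqrt 2 :=
    Real.sq_sqrt (by nlinarith)
  have hrl : (1.79 : ℝ) ≤ Real.sqrt (0.3759 + 2 * Real.sqrt 2) := by nlinarith
  have expand : v * (Real.sin A * Real.sqrt (1 - x ^ 2) + Real.cos A * x)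
      = Real.sin A * (v * Real.sqrt (1 - x ^ 2)) + Real.cos A * (v * x) := by ring
  rw [expand, hkey, hvx]
  have h1 : (0.5555 : ℝ) * 1.79 ≤ Real.sin A * Real.sqrt (0.3759 + 2 * Real.sqrt 2) :=
    mul_le_mul hsinAl hrl (by norm_num) hsinA0
  linarith
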